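/- For n ≥ 3, the total domination number of the path P_n equals n/2 if n ≡ 0 (mod 4), and equals ⌊n/2⌋ + 1 otherwise. -/

import Mathlib

/-- A total dominating set: every vertex has a neighbor in `S`. -/
def SimpleGraph.TotalDominatingSet {V : Type*} (G : SimpleGraph V) (S : Set V) : Prop :=
  ∀ v : V, ∃ u ∈ S, G.Adj v u

/-- The total domination number: minimum cardinality of a total dominating set. -/
noncomputable def SimpleGraph.totalDominationNumber {V : Type*} (G : SimpleGraph V) : ℕ :=
  sInf {k | ∃ S : Set V, G.TotalDominatingSet S ∧ S.ncard = k}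

/-!
Adjacent vertices of a path have opposite parity, so the odd vertices of a total dominating set
must dominate the `⌈n/2⌉` even vertices and the even ones the `⌊n/2⌋` odd vertices. Every vertex
has at most two neighbours, hence `|S| ≥ ⌈⌈n/2⌉/2⌉ + ⌈⌊n/2⌋/2⌉`, which is the claimed value; it is
attained by the vertices `≡ 1, 2 (mod 4)` together with `n - 2`.
-/

open Finset SimpleGraph

theorem Fin.card_filter_val_eq_count (n : ℕ) (p : ℕ → Prop) [DecidablePred p] :
    #{v : Fin n | p v} = Nat.count p n := by
  rw [Nat.count_eq_card_filter_range, ← card_map Fin.valEmbedding]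
  congr 1
  ext k
  simp [Fin.exists_iff, and_comm]

theorem Nat.count_even (n : ℕ) : Nat.count Even n = (n + 1) / 2 := by
  induction n with
  | zero => rfl
  | succ n ih => simp only [Nat.count_succ, ih, Nat.even_iff]; split_ifs <;> omega

theorem Nat.count_odd (n : ℕ) : Nat.count Odd n = n / 2 := by
  induction n with
  | zero => rfl
  | succ n ih => simp only [Nat.count_succ, ih, Nat.odd_iff]; split_ifs <;> omega

theorem Nat.count_mod_four_eq_one_or_two (n : ℕ) :
    Nat.count (fun k => k % 4 = 1 ∨ k % 4 = 2) n = (n + 2) / 4 + (n + 1) / 4 := by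
  induction n with
  | zero => rfl
  | succ n ih => rw [Nat.count_succ, ih]; split_ifs <;> omega

namespace SimpleGraph

variable {V : Type*} {G : SimpleGraph V}

theorem totalDominationNumber_le {S : Set V} (hS : G.TotalDominatingSet S) :
    G.totalDominationNumber ≤ S.ncard :=
  Nat.sInf_le ⟨S, hS, rfl⟩

theorem le_totalDominationNumber {m : ℕ} (hG : ∃ S, G.TotalDominatingSet S)
    (h : ∀ S, G.TotalDominatingSet S → m ≤ S.ncard) : m ≤ G.totalDominationNumber := by
  obtain ⟨S, hS⟩ := hG
  exact le_csInf ⟨_, S, hS, rfl⟩ fun _ ⟨S, hS, hk⟩ => hk ▸ h S hS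

theorem card_le_mul_card_of_forall_exists_adj [DecidableEq V] [G.LocallyFinite] {d : ℕ}
    (hd : ∀ v, G.degree v ≤ d) {A S : Finset V} (h : ∀ a ∈ A, ∃ s ∈ S, G.Adj a s) :
    #A ≤ d * #S := by
  choose! f hfS hfadj using h
  refine card_le_mul_card_image_of_maps_to hfS d fun s _ => ?_
  calc #{a ∈ A | f a = s}
      ≤ #(G.neighborFinset s) := card_le_card fun a ha => by
        obtain ⟨haA, rfl⟩ := mem_filter.1 ha
        simpa using (hfadj a haA).symm
    _ = G.degree s := G.card_neighborFinset_eq_degree s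
    _ ≤ d := hd s

variable {n : ℕ}

theorem pathGraph_degree_le_two [(pathGraph n).LocallyFinite] (v : Fin n) :
    (pathGraph n).degree v ≤ 2 := by
  rw [← card_neighborFinset_eq_degree]
  calc #((pathGraph n).neighborFinset v)
      ≤ #({v.val - 1, v.val + 1} : Finset ℕ) :=
        card_le_card_of_injOn Fin.val (fun u hu => by
          rw [mem_coe, mem_neighborFinset, pathGraph_adj] at hu
          simp only [coe_insert, coe_singleton, Set.mem_insert_iff, Set.mem_singleton_iff]
          omega) Fin.val_injective.injOn
    _ ≤ 2 := card_le_two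

theorem pathGraph_count_le_of_totalDominatingSet {S : Finset (Fin n)}
    (hS : (pathGraph n).TotalDominatingSet S) (p : ℕ → Prop) [DecidablePred p]
    (hp : ∀ k, p (k + 1) ↔ ¬p k) :
    Nat.count p n ≤ 2 * #{s ∈ S | ¬p s.val} := by
  classical
  rw [← Fin.card_filter_val_eq_count]
  refine card_le_mul_card_of_forall_exists_adj pathGraph_degree_le_two fun a ha => ?_
  obtain ⟨s, hsS, has⟩ := hS a
  refine ⟨s, mem_filter.2 ⟨hsS, ?_⟩, has⟩
  have hpa : p a := (mem_filter.1 ha).2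
  rcases pathGraph_adj.1 has with h | h
  · rwa [← h, hp, not_not]
  · rwa [← h, hp] at hpa

theorem le_ncard_of_pathGraph_totalDominatingSet {S : Set (Fin n)}
    (hS : (pathGraph n).TotalDominatingSet S) :
    (if n % 4 = 0 then n / 2 else n / 2 + 1) ≤ S.ncard := by
  classical
  have hT : (pathGraph n).TotalDominatingSet ↑S.toFinset := by rwa [Set.coe_toFinset]
  have hEven := pathGraph_count_le_of_totalDominatingSet hT Even fun k => Nat.even_add_one
  have hOdd := pathGraph_count_le_of_totalDominatingSet hT Odd fun k => Nat.odd_add_one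
  simp only [Nat.count_even, Nat.count_odd, Nat.not_odd_iff_even] at hEven hOdd
  have hsplit := card_filter_add_card_filter_not (s := S.toFinset) (fun s : Fin n => Even s.val)
  rw [Set.ncard_eq_toFinset_card']
  split_ifs <;> omega

/-- The blocks `{4k + 1, 4k + 2}` dominate `4k, …, 4k + 3`; the vertex `n - 2` dominates `n - 1`
when the last block is incomplete. -/
def pathGraphTotalDominatingSet (n : ℕ) (hn : 2 ≤ n) : Finset (Fin n) :=
  insert ⟨n - 2, by omega⟩ ({v | v.val % 4 = 1 ∨ v.val % 4 = 2} : Finset (Fin n))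

theorem totalDominatingSet_pathGraphTotalDominatingSet (hn : 2 ≤ n) :
    (pathGraph n).TotalDominatingSet (pathGraphTotalDominatingSet n hn) := by
  intro v
  obtain ⟨w, hwn, hwS, hvw⟩ : ∃ w < n, (w + 2 = n ∨ w % 4 = 1 ∨ w % 4 = 2) ∧
      (v.val + 1 = w ∨ w + 1 = v.val) := by
    have hv := v.isLt
    by_cases hnext : v.val % 4 ≤ 1 ∧ v.val + 1 < n
    · exact ⟨v + 1, hnext.2, by omega⟩
    · exact ⟨v - 1, by omega, by omega⟩
  refine ⟨⟨w, hwn⟩, ?_, pathGraph_adj.2 hvw⟩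
  simp only [pathGraphTotalDominatingSet, coe_insert, coe_filter, mem_univ, true_and,
    Set.mem_insert_iff, Fin.ext_iff, Set.mem_ofPred_eq]
  omega

theorem card_pathGraphTotalDominatingSet (hn : 2 ≤ n) :
    #(pathGraphTotalDominatingSet n hn) = if n % 4 = 0 then n / 2 else n / 2 + 1 := by
  have hcount := Fin.card_filter_val_eq_count n (fun k => k % 4 = 1 ∨ k % 4 = 2)
  rw [Nat.count_mod_four_eq_one_or_two] at hcount
  rw [pathGraphTotalDominatingSet, card_insert_eq_ite, hcount]
  simp only [mem_filter, mem_univ, true_and]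
  split_ifs <;> omega

end SimpleGraph

theorem totalDomination_pathGraph (n : ℕ) (hn : 3 ≤ n) :
    (SimpleGraph.pathGraph n).totalDominationNumber =
      if n % 4 = 0 then n / 2 else n / 2 + 1 := by
  have h2 : 2 ≤ n := by omega
  have hdom := totalDominatingSet_pathGraphTotalDominatingSet h2
  refine le_antisymm ?_ (le_totalDominationNumber ⟨_, hdom⟩ fun _ hS =>
    le_ncard_of_pathGraph_totalDominatingSet hS)
  calc (pathGraph n).totalDominationNumber
      ≤ (pathGraphTotalDominatingSet n h2 : Set (Fin n)).ncard := totalDominationNumber_le hdom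
    _ = _ := by rw [Set.ncard_coe_finset, card_pathGraphTotalDominatingSet]
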